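/- arXiv:1111.2445 — 2 statements merged into one kernel-verified Lean document; each statement's English description precedes it below -/
import Mathlib

section
/- Sector condition bound on capacity: if the generator L of an irreducible finite Markov chain satisfies ⟨Lf, g⟩_μ² ≤ C₀ ⟨(−L)f, f⟩_μ ⟨(−L)g, g⟩_μ for all f, g, then for all disjoint subsets A, B: Cap^s(A,B) ≤ Cap(A,B) ≤ C₀ Cap^s(A,B), where Cap^s is the capacity of the reversible chain with generator S = (L+L*)/2. -/
/-!
Stationarity of `μ` gives `⟨L* F, H⟩_μ = ⟨L H, F⟩_μ` and
`⟨(-S) F, F⟩_μ = ⟨(-L) F, F⟩_μ =: D(F) ≥ 0`, so the objective is `2⟨L H, F⟩_μ - D(H)`.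
For an admissible `F`, the test function `H = -F` gives the value `D(F)`, while the sector
condition and AM-GM give `2⟨L H, F⟩_μ - D(H) ≤ 2 √(C₀ D(H) D(F)) - D(H) ≤ C₀ D(F)`.
Hence `D(F) ≤ sup_H ≤ C₀ D(F)` for every `F`, and both inequalities follow by taking infima
over `F`.
-/

open Finset

/-- The generator associated to jump rates `q`: `(L f)(x) = ∑ y, q x y * (f y - f x)`. -/
noncomputable def Ld {E : Type*} [Fintype E] (q : E → E → ℝ) (f : E → ℝ) (x : E) : ℝ :=
  ∑ y, q x y * (f y - f x)

/-- The adjoint jump rates: `r* x y = μ y * r y x / μ x`. -/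
noncomputable def adjRates {E : Type*} (r : E → E → ℝ) (μ : E → ℝ) : E → E → ℝ :=
  fun x y => μ y * r y x / μ x

/-- The symmetric part of the generator: `S = (L + L*) / 2`. -/
noncomputable def symOp {E : Type*} [Fintype E] (r : E → E → ℝ) (μ : E → ℝ)
    (f : E → ℝ) (x : E) : ℝ :=
  (Ld r f x + Ld (adjRates r μ) f x) / 2

section
variable {α : Type*} {P Q : α → Prop} {f g : α → ℝ}

theorem sInf_le_mul_sInf_of_le_mul {c : ℝ} (hc : 0 < c) (hne : ∃ a, P a ∧ Q a)
    (hg : ∀ a, 0 ≤ g a) (h : ∀ a, P a → Q a → g a ≤ c * f a) :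
    sInf {v | ∃ a, P a ∧ Q a ∧ v = g a} ≤ c * sInf {v | ∃ a, P a ∧ Q a ∧ v = f a} := by
  obtain ⟨a₀, hP₀, hQ₀⟩ := hne
  rw [← div_le_iff₀' hc]
  refine le_csInf ⟨_, a₀, hP₀, hQ₀, rfl⟩ ?_
  rintro _ ⟨a, hP, hQ, rfl⟩
  rw [div_le_iff₀' hc]
  have hbdd : BddBelow {v | ∃ a, P a ∧ Q a ∧ v = g a} := ⟨0, by rintro _ ⟨b, -, -, rfl⟩; exact hg b⟩
  exact (csInf_le hbdd ⟨a, hP, hQ, rfl⟩).trans (h a hP hQ)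

theorem sInf_le_sInf_of_le (hne : ∃ a, P a ∧ Q a) (hf : ∀ a, 0 ≤ f a)
    (h : ∀ a, P a → Q a → f a ≤ g a) :
    sInf {v | ∃ a, P a ∧ Q a ∧ v = f a} ≤ sInf {v | ∃ a, P a ∧ Q a ∧ v = g a} := by
  simpa only [one_mul] using sInf_le_mul_sInf_of_le_mul one_pos hne hf (by simpa only [one_mul])

theorem two_mul_sub_le_of_sq_le_mul {a c d e : ℝ} (hc : 0 ≤ c) (hd : 0 ≤ d) (he : 0 ≤ e)
    (h : a ^ 2 ≤ c * d * e) : 2 * a - d ≤ c * e := by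
  -- `(2a)² ≤ 4cde ≤ (d + ce)²`
  nlinarith [sq_nonneg (d - c * e), mul_nonneg hc he]

end

noncomputable def dirichlet {E : Type*} [Fintype E] (q : E → E → ℝ) (μ f : E → ℝ) : ℝ :=
  ∑ x, μ x * (-(Ld q f x)) * f x

section
variable {E : Type*} [Fintype E] {r : E → E → ℝ} {μ : E → ℝ}

theorem sum_mul_Ld_eq_zero (hstat : ∀ y, ∑ x, μ x * r x y = μ y * ∑ x, r y x) (φ : E → ℝ) :
    ∑ x, μ x * Ld r φ x = 0 := by
  simp only [Ld, mul_sub, mul_sum, sum_sub_distrib]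
  rw [sub_eq_zero, sum_comm]
  refine sum_congr rfl fun y _ => ?_
  simp only [← mul_assoc]
  rw [← sum_mul, hstat, mul_sum, sum_mul]

theorem sum_Ld_adjRates_mul (hμ : ∀ x, μ x ≠ 0) (hstat : ∀ y, ∑ x, μ x * r x y = μ y * ∑ x, r y x)
    (f g : E → ℝ) :
    ∑ x, μ x * Ld (adjRates r μ) f x * g x = ∑ x, μ x * Ld r g x * f x := by
  -- after exchanging the order of summation on the left, the difference is `∑ μ L(fg) = 0`
  have h := sum_mul_Ld_eq_zero hstat (fun x => f x * g x)
  simp only [Ld, adjRates, mul_sum, sum_mul] at h ⊢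
  rw [sum_comm (f := fun x y => μ x * (μ y * r y x / μ x * (f y - f x)) * g x), ← sub_eq_zero,
    ← neg_eq_zero, neg_sub, ← sum_sub_distrib, ← h]
  refine sum_congr rfl fun x _ => ?_
  rw [← sum_sub_distrib]
  refine sum_congr rfl fun y _ => ?_
  field_simp [hμ y]
  ring

theorem Ld_neg (q : E → E → ℝ) (f : E → ℝ) : Ld q (-f) = -Ld q f := by
  ext x
  simp only [Ld, Pi.neg_apply, ← sum_neg_distrib]
  exact sum_congr rfl fun y _ => by ring

theorem dirichlet_neg (q : E → E → ℝ) (f : E → ℝ) : dirichlet q μ (-f) = dirichlet q μ f := by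
  simp only [dirichlet, Ld_neg, Pi.neg_apply, neg_neg, mul_neg, neg_mul]

theorem dirichlet_adjRates (hμ : ∀ x, μ x ≠ 0) (hstat : ∀ y, ∑ x, μ x * r x y = μ y * ∑ x, r y x)
    (f : E → ℝ) : dirichlet (adjRates r μ) μ f = dirichlet r μ f := by
  simp only [dirichlet, mul_neg, neg_mul, sum_neg_distrib, sum_Ld_adjRates_mul hμ hstat]

theorem sum_symOp_mul_self (hμ : ∀ x, μ x ≠ 0) (hstat : ∀ y, ∑ x, μ x * r x y = μ y * ∑ x, r y x)
    (f : E → ℝ) : ∑ x, μ x * (-(symOp r μ f x)) * f x = dirichlet r μ f :=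
  calc ∑ x, μ x * (-(symOp r μ f x)) * f x
      = (dirichlet r μ f + dirichlet (adjRates r μ) μ f) / 2 := by
        simp only [dirichlet, symOp, ← sum_add_distrib, sum_div]
        exact sum_congr rfl fun x _ => by ring
    _ = dirichlet r μ f := by rw [dirichlet_adjRates hμ hstat]; ring

theorem dirichlet_eq_half_sum_sq (hstat : ∀ y, ∑ x, μ x * r x y = μ y * ∑ x, r y x)
    (f : E → ℝ) : dirichlet r μ f = (∑ x, ∑ y, μ x * r x y * (f y - f x) ^ 2) / 2 := by
  have h := sum_mul_Ld_eq_zero hstat (fun x => f x ^ 2)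
  rw [eq_div_iff two_ne_zero, ← sub_zero (∑ x, ∑ y, _), ← h]
  simp only [dirichlet, Ld, mul_neg, neg_mul, mul_sum, sum_mul, ← sum_neg_distrib,
    ← sum_sub_distrib]
  exact sum_congr rfl fun x _ => sum_congr rfl fun y _ => by ring

theorem dirichlet_nonneg (hr : ∀ x y, 0 ≤ r x y) (hμ : ∀ x, 0 ≤ μ x)
    (hstat : ∀ y, ∑ x, μ x * r x y = μ y * ∑ x, r y x) (f : E → ℝ) : 0 ≤ dirichlet r μ f := by
  rw [dirichlet_eq_half_sum_sq hstat]
  exact div_nonneg (sum_nonneg fun x _ => sum_nonneg fun y _ =>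
    mul_nonneg (mul_nonneg (hμ x) (hr x y)) (sq_nonneg _)) zero_le_two

variable (r μ) in
/-- `Cap(A,B)` is the infimum, over `F` with `F = 1` on `A` and `F = 0` on `B`, of the supremum of
this set. -/
noncomputable def capacityVariationalSet (A B : Finset E) (F : E → ℝ) : Set ℝ :=
  {w | ∃ H : E → ℝ, (∀ x ∈ A, ∀ y ∈ A, H x = H y) ∧ (∀ x ∈ B, ∀ y ∈ B, H x = H y) ∧
    w = 2 * (∑ x, μ x * Ld (adjRates r μ) F x * H x) - ∑ x, μ x * H x * (-(symOp r μ H x))}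

theorem capacity_objective_eq (hμ : ∀ x, μ x ≠ 0)
    (hstat : ∀ y, ∑ x, μ x * r x y = μ y * ∑ x, r y x) (F H : E → ℝ) :
    2 * (∑ x, μ x * Ld (adjRates r μ) F x * H x) - ∑ x, μ x * H x * (-(symOp r μ H x)) =
      2 * (∑ x, μ x * Ld r H x * F x) - dirichlet r μ H := by
  rw [sum_Ld_adjRates_mul hμ hstat, ← sum_symOp_mul_self hμ hstat]
  simp only [mul_right_comm (μ _)]

variable {A B : Finset E}

theorem zero_mem_capacityVariationalSet (F : E → ℝ) : 0 ∈ capacityVariationalSet r μ A B F :=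
  ⟨0, fun _ _ _ _ => rfl, fun _ _ _ _ => rfl, by simp [Ld, symOp]⟩

theorem dirichlet_mem_capacityVariationalSet (hμ : ∀ x, μ x ≠ 0)
    (hstat : ∀ y, ∑ x, μ x * r x y = μ y * ∑ x, r y x) {F : E → ℝ}
    (hFA : ∀ x ∈ A, F x = 1) (hFB : ∀ x ∈ B, F x = 0) :
    dirichlet r μ F ∈ capacityVariationalSet r μ A B F := by
  refine ⟨-F, fun x hx y hy => by simp [hFA x hx, hFA y hy],
    fun x hx y hy => by simp [hFB x hx, hFB y hy], ?_⟩
  rw [capacity_objective_eq hμ hstat, dirichlet_neg, Ld_neg]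
  simp only [Pi.neg_apply]
  rw [dirichlet]
  ring

theorem le_of_mem_capacityVariationalSet {C₀ : ℝ} (hC₀ : 0 ≤ C₀) (hr : ∀ x y, 0 ≤ r x y)
    (hμ : ∀ x, 0 < μ x) (hstat : ∀ y, ∑ x, μ x * r x y = μ y * ∑ x, r y x)
    (hsector : ∀ f g : E → ℝ,
      (∑ x, μ x * Ld r f x * g x) ^ 2 ≤ C₀ * dirichlet r μ f * dirichlet r μ g)
    {F : E → ℝ} {w : ℝ} (hw : w ∈ capacityVariationalSet r μ A B F) :
    w ≤ C₀ * dirichlet r μ F := by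
  obtain ⟨H, -, -, rfl⟩ := hw
  rw [capacity_objective_eq (fun x => (hμ x).ne') hstat]
  exact two_mul_sub_le_of_sq_le_mul hC₀ (dirichlet_nonneg hr (fun x => (hμ x).le) hstat H)
    (dirichlet_nonneg hr (fun x => (hμ x).le) hstat F) (hsector H F)

end

theorem sector_condition_capacity_bound_general {E : Type*} [Fintype E]
    (r : E → E → ℝ) (μ : E → ℝ) (A B : Finset E) (C₀ : ℝ) (hC₀ : 0 < C₀)
    (hAB : Disjoint A B)
    (hr : ∀ x y, 0 ≤ r x y)
    (hμ : ∀ x, 0 < μ x)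
    (hstat : ∀ y, ∑ x, μ x * r x y = μ y * ∑ x, r y x)
    (hsector : ∀ f g : E → ℝ,
      (∑ x, μ x * Ld r f x * g x) ^ 2 ≤
        C₀ * (∑ x, μ x * (-(Ld r f x)) * f x) *
          (∑ x, μ x * (-(Ld r g x)) * g x)) :
    sInf { v : ℝ | ∃ F : E → ℝ, (∀ x ∈ A, F x = 1) ∧ (∀ x ∈ B, F x = 0) ∧
        v = ∑ x, μ x * (-(symOp r μ F x)) * F x } ≤
      sInf { v : ℝ | ∃ F : E → ℝ, (∀ x ∈ A, F x = 1) ∧ (∀ x ∈ B, F x = 0) ∧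
        v = sSup { w : ℝ | ∃ H : E → ℝ,
          (∀ x ∈ A, ∀ y ∈ A, H x = H y) ∧ (∀ x ∈ B, ∀ y ∈ B, H x = H y) ∧
          w = 2 * (∑ x, μ x * Ld (adjRates r μ) F x * H x) -
              ∑ x, μ x * H x * (-(symOp r μ H x)) } } ∧
    sInf { v : ℝ | ∃ F : E → ℝ, (∀ x ∈ A, F x = 1) ∧ (∀ x ∈ B, F x = 0) ∧
        v = sSup { w : ℝ | ∃ H : E → ℝ,
          (∀ x ∈ A, ∀ y ∈ A, H x = H y) ∧ (∀ x ∈ B, ∀ y ∈ B, H x = H y) ∧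
          w = 2 * (∑ x, μ x * Ld (adjRates r μ) F x * H x) -
              ∑ x, μ x * H x * (-(symOp r μ H x)) } } ≤
      C₀ * sInf { v : ℝ | ∃ F : E → ℝ, (∀ x ∈ A, F x = 1) ∧ (∀ x ∈ B, F x = 0) ∧
        v = ∑ x, μ x * (-(symOp r μ F x)) * F x } := by
  have hμ₀ : ∀ x, μ x ≠ 0 := fun x => (hμ x).ne'
  have hD : ∀ F, dirichlet r μ F = ∑ x, μ x * (-(symOp r μ F x)) * F x :=
    fun F => (sum_symOp_mul_self hμ₀ hstat F).symm
  have hadm : ∃ F : E → ℝ, (∀ x ∈ A, F x = 1) ∧ (∀ x ∈ B, F x = 0) :=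
    ⟨(A : Set E).indicator 1, fun x hx => Set.indicator_of_mem (mem_coe.2 hx) 1,
      fun x hx => Set.indicator_of_notMem (fun hxA => disjoint_left.1 hAB hxA hx) 1⟩
  have hbound : ∀ F, ∀ w ∈ capacityVariationalSet r μ A B F, w ≤ C₀ * dirichlet r μ F :=
    fun _ _ => le_of_mem_capacityVariationalSet hC₀.le hr hμ hstat hsector
  have hbdd : ∀ F, BddAbove (capacityVariationalSet r μ A B F) := fun F => ⟨_, hbound F⟩
  constructor
  · refine sInf_le_sInf_of_le hadm
      (fun F => hD F ▸ dirichlet_nonneg hr (fun x => (hμ x).le) hstat F) fun F hFA hFB => hD F ▸ ?_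
    exact le_csSup (hbdd F) (dirichlet_mem_capacityVariationalSet hμ₀ hstat hFA hFB)
  · refine sInf_le_mul_sInf_of_le_mul hC₀ hadm
      (fun F => le_csSup (hbdd F) (zero_mem_capacityVariationalSet F)) fun F _ _ => hD F ▸ ?_
    exact csSup_le ⟨0, zero_mem_capacityVariationalSet F⟩ (hbound F)

/-- **Sector condition bound on the capacity.**
If the generator `L` of a finite irreducible chain satisfies the sector
condition `⟨L f, g⟩_μ² ≤ C₀ ⟨(-L) f, f⟩_μ ⟨(-L) g, g⟩_μ`, then for all
disjoint `A`, `B`: `Cap^s(A,B) ≤ Cap(A,B) ≤ C₀ Cap^s(A,B)`, where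
`Cap(A,B) = inf_F sup_H {2⟨L* F, H⟩_μ - ⟨H, (-S) H⟩_μ}` over `F` equal to
`1` on `A` and `0` on `B` and `H` constant on `A` and on `B`, and
`Cap^s(A,B) = inf_F ⟨(-S) F, F⟩_μ` over the same class of `F`. -/
theorem sector_condition_capacity_bound {E : Type*} [Fintype E] [DecidableEq E]
    (r : E → E → ℝ) (μ : E → ℝ) (A B : Finset E) (C₀ : ℝ) (hC₀ : 0 < C₀)
    (hA : A.Nonempty) (hB : B.Nonempty) (hAB : Disjoint A B)
    (hr : ∀ x y, 0 ≤ r x y) (hrdiag : ∀ x, r x x = 0)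
    (hμ : ∀ x, 0 < μ x)
    (hstat : ∀ y, ∑ x, μ x * r x y = μ y * ∑ x, r y x)
    (hirr : ∀ h : E → ℝ,
      (∀ x y, 0 < μ x * r x y + μ y * r y x → h x = h y) → ∀ x y, h x = h y)
    (hsector : ∀ f g : E → ℝ,
      (∑ x, μ x * Ld r f x * g x) ^ 2 ≤
        C₀ * (∑ x, μ x * (-(Ld r f x)) * f x) *
          (∑ x, μ x * (-(Ld r g x)) * g x)) :
    sInf { v : ℝ | ∃ F : E → ℝ, (∀ x ∈ A, F x = 1) ∧ (∀ x ∈ B, F x = 0) ∧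
        v = ∑ x, μ x * (-(symOp r μ F x)) * F x } ≤
      sInf { v : ℝ | ∃ F : E → ℝ, (∀ x ∈ A, F x = 1) ∧ (∀ x ∈ B, F x = 0) ∧
        v = sSup { w : ℝ | ∃ H : E → ℝ,
          (∀ x ∈ A, ∀ y ∈ A, H x = H y) ∧ (∀ x ∈ B, ∀ y ∈ B, H x = H y) ∧
          w = 2 * (∑ x, μ x * Ld (adjRates r μ) F x * H x) -
              ∑ x, μ x * H x * (-(symOp r μ H x)) } } ∧
    sInf { v : ℝ | ∃ F : E → ℝ, (∀ x ∈ A, F x = 1) ∧ (∀ x ∈ B, F x = 0) ∧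
        v = sSup { w : ℝ | ∃ H : E → ℝ,
          (∀ x ∈ A, ∀ y ∈ A, H x = H y) ∧ (∀ x ∈ B, ∀ y ∈ B, H x = H y) ∧
          w = 2 * (∑ x, μ x * Ld (adjRates r μ) F x * H x) -
              ∑ x, μ x * H x * (-(symOp r μ H x)) } } ≤
      C₀ * sInf { v : ℝ | ∃ F : E → ℝ, (∀ x ∈ A, F x = 1) ∧ (∀ x ∈ B, F x = 0) ∧
        v = ∑ x, μ x * (-(symOp r μ F x)) * F x } :=
  sector_condition_capacity_bound_general r μ A B C₀ hC₀ hAB hr hμ hstat hsector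
end

section
/- Collapsed chain capacity identity: let A, B be disjoint subsets of a finite irreducible Markov chain's state space, and let the chain obtained by collapsing A to a point a and B to a point b have capacity Cap̄({a},{b}); then Cap̄({a},{b}) = Cap(A,B). -/
open Finset

/-- The state space of the chain obtained by collapsing `A` to a point
`Sum.inr true` and `B` to a point `Sum.inr false`. -/
abbrev Collapsed {E : Type*} [DecidableEq E] (A B : Finset E) : Type _ :=
  {x : E // x ∉ A ∧ x ∉ B} ⊕ Bool

/-- The jump rates of the collapsed chain. -/
noncomputable def collapsedRates {E : Type*} [Fintype E] [DecidableEq E]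
    (A B : Finset E) (r : E → E → ℝ) (μ : E → ℝ) :
    Collapsed A B → Collapsed A B → ℝ
  | Sum.inl x, Sum.inl y => r x.1 y.1
  | Sum.inl x, Sum.inr true => ∑ z ∈ A, r x.1 z
  | Sum.inl x, Sum.inr false => ∑ z ∈ B, r x.1 z
  | Sum.inr true, Sum.inl y => (∑ z ∈ A, μ z * r z y.1) / ∑ z ∈ A, μ z
  | Sum.inr false, Sum.inl y => (∑ z ∈ B, μ z * r z y.1) / ∑ z ∈ B, μ z
  | Sum.inr true, Sum.inr true => 0
  | Sum.inr true, Sum.inr false =>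
      (∑ z ∈ A, μ z * ∑ w ∈ B, r z w) / ∑ z ∈ A, μ z
  | Sum.inr false, Sum.inr true =>
      (∑ z ∈ B, μ z * ∑ w ∈ A, r z w) / ∑ z ∈ B, μ z
  | Sum.inr false, Sum.inr false => 0

/-- The stationary measure of the collapsed chain: mass `μ(A)` at the
collapsed point `a`, mass `μ(B)` at `b`, and `μ x` elsewhere. -/
noncomputable def collapsedMeasure {E : Type*} [Fintype E] [DecidableEq E]
    (A B : Finset E) (μ : E → ℝ) : Collapsed A B → ℝ
  | Sum.inl x => μ x.1
  | Sum.inr true => ∑ z ∈ A, μ z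
  | Sum.inr false => ∑ z ∈ B, μ z

section Aux
set_option linter.unusedSectionVars false
variable {E : Type*} [Fintype E] [DecidableEq E]

lemma ld_neg (r : E → E → ℝ) (f : E → ℝ) (x : E) :
    -(Ld r f x) = ∑ y, r x y * (f x - f y) := by
  rw [Ld, ← Finset.sum_neg_distrib]
  exact Finset.sum_congr rfl fun y _ => by ring

lemma Ld_sub (r : E → E → ℝ) (f g : E → ℝ) (x : E) :
    Ld r (fun y => f y - g y) x = Ld r f x - Ld r g x := by
  rw [Ld, Ld, Ld, ← Finset.sum_sub_distrib]
  exact Finset.sum_congr rfl fun y _ => by ring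

lemma energy (r : E → E → ℝ) (μ : E → ℝ)
    (hstat : ∀ y, ∑ x, μ x * r x y = μ y * ∑ x, r y x) (u : E → ℝ) :
    ∑ x, ∑ y, μ x * r x y * (u x - u y)^2
      = 2 * ∑ x, μ x * u x * (-(Ld r u x)) := by
  have h1 : ∑ x, μ x * u x * (-(Ld r u x))
      = ∑ x, ∑ y, μ x * r x y * (u x * (u x - u y)) := by
    refine Finset.sum_congr rfl fun x _ => ?_
    rw [ld_neg, Finset.mul_sum]
    exact Finset.sum_congr rfl fun y _ => by ring
  have h2 : ∑ x, ∑ y, μ x * r x y * (u y)^2 = ∑ x, ∑ y, μ x * r x y * (u x)^2 := by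
    rw [Finset.sum_comm]
    calc ∑ y, ∑ x, μ x * r x y * (u y)^2
        = ∑ y, (∑ x, μ x * r x y) * (u y)^2 := by
          exact Finset.sum_congr rfl fun y _ => by rw [Finset.sum_mul]
      _ = ∑ y, (μ y * ∑ x, r y x) * (u y)^2 := by
          exact Finset.sum_congr rfl fun y _ => by rw [hstat]
      _ = ∑ y, ∑ x, μ y * r y x * (u y)^2 := by
          exact Finset.sum_congr rfl fun y _ => by rw [Finset.mul_sum, Finset.sum_mul]
  rw [h1]
  calc ∑ x, ∑ y, μ x * r x y * (u x - u y)^2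
      = ∑ x, ∑ y, (2 * (μ x * r x y * (u x * (u x - u y)))
          + (μ x * r x y * (u y)^2 - μ x * r x y * (u x)^2)) :=
        Finset.sum_congr rfl fun x _ => Finset.sum_congr rfl fun y _ => by ring
    _ = 2 * (∑ x, ∑ y, μ x * r x y * (u x * (u x - u y)))
          + ((∑ x, ∑ y, μ x * r x y * (u y)^2) - (∑ x, ∑ y, μ x * r x y * (u x)^2)) := by
        simp [Finset.sum_add_distrib, Finset.sum_sub_distrib, Finset.mul_sum]
    _ = 2 * ∑ x, ∑ y, μ x * r x y * (u x * (u x - u y)) := by rw [h2]; ring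

lemma const_of_zero_energy (r : E → E → ℝ) (μ : E → ℝ)
    (hr : ∀ x y, 0 ≤ r x y) (hμ : ∀ x, 0 < μ x)
    (hstat : ∀ y, ∑ x, μ x * r x y = μ y * ∑ x, r y x)
    (hirr : ∀ h : E → ℝ,
      (∀ x y, 0 < μ x * r x y + μ y * r y x → h x = h y) → ∀ x y, h x = h y)
    (u : E → ℝ) (hu : ∀ x, μ x * u x * (-(Ld r u x)) = 0) :
    ∀ x y, u x = u y := by
  have hE : ∑ x, ∑ y, μ x * r x y * (u x - u y)^2 = 0 := by
    rw [energy r μ hstat u]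
    simp [hu]
  have hterm : ∀ x y, μ x * r x y * (u x - u y)^2 = 0 := by
    intro x y
    have hnn : ∀ a b : E, 0 ≤ μ a * r a b * (u a - u b)^2 := fun a b =>
      mul_nonneg (mul_nonneg (hμ a).le (hr a b)) (sq_nonneg _)
    have h₁ := (Finset.sum_eq_zero_iff_of_nonneg
      (fun x _ => Finset.sum_nonneg fun y _ => hnn x y)).mp hE x (mem_univ x)
    exact (Finset.sum_eq_zero_iff_of_nonneg (fun y _ => hnn x y)).mp h₁ y (mem_univ y)
  refine hirr u fun x y hpos => ?_
  have hor : 0 < r x y ∨ 0 < r y x := by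
    by_contra h
    push_neg at h
    have e1 : r x y = 0 := le_antisymm h.1 (hr x y)
    have e2 : r y x = 0 := le_antisymm h.2 (hr y x)
    rw [e1, e2] at hpos; simp at hpos
  have key : ∀ a b : E, 0 < r a b → u a = u b := by
    intro a b hab
    have hm : 0 < μ a * r a b := mul_pos (hμ a) hab
    have hsq : (u a - u b)^2 = 0 :=
      (mul_eq_zero.mp (hterm a b)).resolve_left (ne_of_gt hm)
    have := pow_eq_zero_iff (n := 2) (by norm_num) |>.mp hsq
    linarith [sub_eq_zero.mp this]
  rcases hor with h | h
  · exact key x y h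
  · exact (key y x h).symm

lemma split_sum (A B : Finset E) (hAB : Disjoint A B) (f : E → ℝ) :
    ∑ y, f y = (∑ y ∈ A, f y) + (∑ y ∈ B, f y)
      + ∑ y : {x : E // x ∉ A ∧ x ∉ B}, f y.1 := by
  classical
  have h3 : ∑ y : {x : E // x ∉ A ∧ x ∉ B}, f y.1
      = ∑ y ∈ univ.filter (fun x => x ∉ A ∧ x ∉ B), f y :=
    (Finset.sum_subtype _ (fun x => by simp) f).symm
  rw [h3, ← Finset.sum_filter_add_sum_filter_not univ (fun x => x ∈ A) f]
  have e1 : univ.filter (fun x => x ∈ A) = A := by ext x; simp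
  have e2 : (univ.filter (fun x => ¬ x ∈ A)).filter (fun x => x ∈ B) = B := by
    ext x; simp only [mem_filter, mem_univ, true_and]
    exact ⟨fun h => h.2, fun h => ⟨Finset.disjoint_right.mp hAB h, h⟩⟩
  have e3 : (univ.filter (fun x => ¬ x ∈ A)).filter (fun x => ¬ x ∈ B)
      = univ.filter (fun x => x ∉ A ∧ x ∉ B) := by
    ext x; simp [and_comm]
  rw [← Finset.sum_filter_add_sum_filter_not (univ.filter (fun x => ¬ x ∈ A))
    (fun x => x ∈ B) f, e1, e2, e3, add_assoc]

/-- Extension of `Vb` to `E`. -/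
noncomputable def gfun (A B : Finset E) (Vb : Collapsed A B → ℝ) : E → ℝ :=
  fun x => if h1 : x ∈ A then 1 else if h2 : x ∈ B then 0
    else Vb (Sum.inl ⟨x, h1, h2⟩)

lemma gfun_A {A B : Finset E} {Vb : Collapsed A B → ℝ} {x : E} (h : x ∈ A) :
    gfun A B Vb x = 1 := by simp [gfun, h]

lemma gfun_B {A B : Finset E} {Vb : Collapsed A B → ℝ} {x : E}
    (hAB : Disjoint A B) (h : x ∈ B) : gfun A B Vb x = 0 := by
  have h1 : x ∉ A := Finset.disjoint_right.mp hAB h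
  simp [gfun, h1, h]

lemma gfun_C {A B : Finset E} {Vb : Collapsed A B → ℝ} {x : E}
    (h1 : x ∉ A) (h2 : x ∉ B) : gfun A B Vb x = Vb (Sum.inl ⟨x, h1, h2⟩) := by
  simp [gfun, h1, h2]

lemma gfun_sub {A B : Finset E} {Vb : Collapsed A B → ℝ}
    (y : {x : E // x ∉ A ∧ x ∉ B}) : gfun A B Vb y.1 = Vb (Sum.inl y) := by
  rw [gfun_C y.2.1 y.2.2]

lemma collapsed_Ld_inl (A B : Finset E) (hAB : Disjoint A B)
    (r : E → E → ℝ) (μ : E → ℝ) (Vb : Collapsed A B → ℝ)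
    (hVba : Vb (Sum.inr true) = 1) (hVbb : Vb (Sum.inr false) = 0)
    (x : {x : E // x ∉ A ∧ x ∉ B}) :
    Ld (collapsedRates A B r μ) Vb (Sum.inl x) = Ld r (gfun A B Vb) x.1 := by
  rw [Ld, Ld, Fintype.sum_sum_type, Fintype.sum_bool]
  rw [split_sum A B hAB (fun y => r x.1 y * (gfun A B Vb y - gfun A B Vb x.1))]
  have hgx : gfun A B Vb x.1 = Vb (Sum.inl x) := gfun_sub x
  have eA : ∑ y ∈ A, r x.1 y * (gfun A B Vb y - gfun A B Vb x.1)
      = (∑ z ∈ A, r x.1 z) * (1 - Vb (Sum.inl x)) := by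
    rw [Finset.sum_mul]
    exact Finset.sum_congr rfl fun y hy => by rw [gfun_A hy, hgx]
  have eB : ∑ y ∈ B, r x.1 y * (gfun A B Vb y - gfun A B Vb x.1)
      = (∑ z ∈ B, r x.1 z) * (0 - Vb (Sum.inl x)) := by
    rw [Finset.sum_mul]
    exact Finset.sum_congr rfl fun y hy => by rw [gfun_B hAB hy, hgx]
  have eC : ∑ y : {x : E // x ∉ A ∧ x ∉ B},
        r x.1 y.1 * (gfun A B Vb y.1 - gfun A B Vb x.1)
      = ∑ y : {x : E // x ∉ A ∧ x ∉ B},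
        collapsedRates A B r μ (Sum.inl x) (Sum.inl y) * (Vb (Sum.inl y) - Vb (Sum.inl x)) := by
    exact Finset.sum_congr rfl fun y _ => by rw [gfun_sub, hgx, collapsedRates]
  rw [eA, eB, eC, hVba, hVbb]
  simp only [collapsedRates]
  ring

end Aux

/-- **Collapsed chain capacity identity: `Cap̄({a},{b}) = Cap(A,B)`.**
For disjoint nonempty `A`, `B` in a finite irreducible chain, the capacity
between the collapsed points `a`, `b` of the collapsed chain equals the
capacity between `A` and `B` of the original chain; both capacities are
expressed via their equilibrium potentials as Dirichlet forms:
`Cap(A,B) = ⟨V_{A,B}, (-L) V_{A,B}⟩_μ` and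
`Cap̄({a},{b}) = ⟨V̄_{a,b}, (-L̄) V̄_{a,b}⟩_μ̄`. -/
theorem collapsed_chain_capacity {E : Type*} [Fintype E] [DecidableEq E]
    (r : E → E → ℝ) (μ : E → ℝ) (A B : Finset E)
    (hA : A.Nonempty) (hB : B.Nonempty) (hAB : Disjoint A B)
    (hr : ∀ x y, 0 ≤ r x y) (hrdiag : ∀ x, r x x = 0)
    (hμ : ∀ x, 0 < μ x)
    (hstat : ∀ y, ∑ x, μ x * r x y = μ y * ∑ x, r y x)
    (hirr : ∀ h : E → ℝ,
      (∀ x y, 0 < μ x * r x y + μ y * r y x → h x = h y) → ∀ x y, h x = h y)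
    (V : E → ℝ)
    (hV1 : ∀ x ∈ A, V x = 1) (hV0 : ∀ x ∈ B, V x = 0)
    (hVharm : ∀ x, x ∉ A → x ∉ B → Ld r V x = 0)
    (Vb : Collapsed A B → ℝ)
    (hVba : Vb (Sum.inr true) = 1) (hVbb : Vb (Sum.inr false) = 0)
    (hVbharm : ∀ x : {x : E // x ∉ A ∧ x ∉ B},
      Ld (collapsedRates A B r μ) Vb (Sum.inl x) = 0) :
    ∑ z : Collapsed A B,
        collapsedMeasure A B μ z * Vb z *
          (-(Ld (collapsedRates A B r μ) Vb z)) =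
      ∑ x, μ x * V x * (-(Ld r V x)) := by
  classical
  set g : E → ℝ := gfun A B Vb with hgdef
  have hμA : (0:ℝ) < ∑ z ∈ A, μ z := Finset.sum_pos (fun z _ => hμ z) hA
  have hμAne : (∑ z ∈ A, μ z) ≠ 0 := ne_of_gt hμA
  have hgharm : ∀ x : {x : E // x ∉ A ∧ x ∉ B}, Ld r g x.1 = 0 := fun x => by
    rw [hgdef, ← collapsed_Ld_inl A B hAB r μ Vb hVba hVbb x]
    exact hVbharm x
  -- V equals the extension g of Vb
  have hu : ∀ x, μ x * (V x - g x) * (-(Ld r (fun y => V y - g y) x)) = 0 := by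
    intro x
    by_cases h1 : x ∈ A
    · rw [hV1 x h1, hgdef, gfun_A h1]; ring
    by_cases h2 : x ∈ B
    · rw [hV0 x h2, hgdef, gfun_B hAB h2]; ring
    · rw [Ld_sub, hVharm x h1 h2, hgharm ⟨x, h1, h2⟩]; ring
  have hconst := const_of_zero_energy r μ hr hμ hstat hirr (fun y => V y - g y) hu
  obtain ⟨x0, hx0⟩ := hA
  have hVg : ∀ x, V x = g x := by
    intro x
    have h := hconst x x0
    have h0 : V x0 - g x0 = 0 := by rw [hV1 x0 hx0, hgdef, gfun_A hx0]; ring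
    linarith [h, h0]
  have hVbV : ∀ y : {x : E // x ∉ A ∧ x ∉ B}, Vb (Sum.inl y) = V y.1 := by
    intro y
    rw [hVg y.1, hgdef, gfun_sub y]
  -- Left-hand side reduces to the term at `a`
  have hLHS : ∑ z : Collapsed A B,
        collapsedMeasure A B μ z * Vb z *
          (-(Ld (collapsedRates A B r μ) Vb z))
      = (∑ z ∈ A, μ z) * (-(Ld (collapsedRates A B r μ) Vb (Sum.inr true))) := by
    rw [Fintype.sum_sum_type, Fintype.sum_bool]
    have hz : ∀ y : {x : E // x ∉ A ∧ x ∉ B},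
        collapsedMeasure A B μ (Sum.inl y) * Vb (Sum.inl y) *
          (-(Ld (collapsedRates A B r μ) Vb (Sum.inl y))) = 0 := fun y => by
      rw [hVbharm y]; ring
    rw [Finset.sum_congr rfl (fun y _ => hz y), Finset.sum_const_zero]
    simp [collapsedMeasure, hVba, hVbb]
  -- Right-hand side reduces to the terms on `A`
  have hRHS : ∑ x, μ x * V x * (-(Ld r V x))
      = ∑ x ∈ A, μ x * (-(Ld r V x)) := by
    rw [split_sum A B hAB (fun x => μ x * V x * (-(Ld r V x)))]
    have eB : ∑ x ∈ B, μ x * V x * (-(Ld r V x)) = 0 :=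
      Finset.sum_eq_zero fun x hx => by rw [hV0 x hx]; ring
    have eC : ∑ y : {x : E // x ∉ A ∧ x ∉ B},
        μ y.1 * V y.1 * (-(Ld r V y.1)) = 0 :=
      Finset.sum_eq_zero fun y _ => by rw [hVharm y.1 y.2.1 y.2.2]; ring
    have eA : ∑ x ∈ A, μ x * V x * (-(Ld r V x))
        = ∑ x ∈ A, μ x * (-(Ld r V x)) :=
      Finset.sum_congr rfl fun x hx => by rw [hV1 x hx]; ring
    rw [eB, eC, eA]; ring
  rw [hLHS, hRHS]
  -- compute the collapsed generator at `a`, multiplied by `μ(A)`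
  have hmain : (∑ z ∈ A, μ z) * (-(Ld (collapsedRates A B r μ) Vb (Sum.inr true)))
      = (∑ z ∈ A, μ z * ∑ w ∈ B, r z w)
        - ∑ y : {x : E // x ∉ A ∧ x ∉ B},
            (∑ z ∈ A, μ z * r z y.1) * (V y.1 - 1) := by
    rw [Ld, Fintype.sum_sum_type, Fintype.sum_bool]
    simp only [collapsedRates, hVba, hVbb]
    have step : ∀ y : {x : E // x ∉ A ∧ x ∉ B},
        ((∑ z ∈ A, μ z * r z y.1) / (∑ z ∈ A, μ z)) * (Vb (Sum.inl y) - 1)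
        = ((∑ z ∈ A, μ z * r z y.1) * (V y.1 - 1)) / (∑ z ∈ A, μ z) := fun y => by
      rw [hVbV y]; ring
    rw [Finset.sum_congr rfl fun y _ => step y, ← Finset.sum_div]
    field_simp
    ring
  rw [hmain]
  -- expand the right-hand side by splitting the inner sum
  have hinner : ∀ x ∈ A, μ x * (-(Ld r V x))
      = (∑ y ∈ B, μ x * r x y)
        + ∑ y : {x : E // x ∉ A ∧ x ∉ B}, μ x * r x y.1 * (1 - V y.1) := by
    intro x hx
    rw [ld_neg, Finset.mul_sum,
      split_sum A B hAB (fun y => μ x * (r x y * (V x - V y)))]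
    have eA : ∑ y ∈ A, μ x * (r x y * (V x - V y)) = 0 :=
      Finset.sum_eq_zero fun y hy => by rw [hV1 x hx, hV1 y hy]; ring
    have eB : ∑ y ∈ B, μ x * (r x y * (V x - V y)) = ∑ y ∈ B, μ x * r x y :=
      Finset.sum_congr rfl fun y hy => by rw [hV1 x hx, hV0 y hy]; ring
    have eC : ∑ y : {x : E // x ∉ A ∧ x ∉ B}, μ x * (r x y.1 * (V x - V y.1))
        = ∑ y : {x : E // x ∉ A ∧ x ∉ B}, μ x * r x y.1 * (1 - V y.1) :=
      Finset.sum_congr rfl fun y _ => by rw [hV1 x hx]; ring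
    rw [eA, eB, eC]; ring
  have t1 : ∑ x ∈ A, ∑ y ∈ B, μ x * r x y = ∑ z ∈ A, μ z * ∑ w ∈ B, r z w :=
    Finset.sum_congr rfl fun z _ => (Finset.mul_sum _ _ _).symm
  have t2 : ∑ x ∈ A, ∑ y : {x : E // x ∉ A ∧ x ∉ B}, μ x * r x y.1 * (1 - V y.1)
      = - ∑ y : {x : E // x ∉ A ∧ x ∉ B},
          (∑ z ∈ A, μ z * r z y.1) * (V y.1 - 1) := by
    rw [Finset.sum_comm, ← Finset.sum_neg_distrib]
    refine Finset.sum_congr rfl fun y _ => ?_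
    rw [show -((∑ z ∈ A, μ z * r z y.1) * (V y.1 - 1))
        = (∑ z ∈ A, μ z * r z y.1) * (1 - V y.1) from by ring, Finset.sum_mul]
  rw [Finset.sum_congr rfl hinner, Finset.sum_add_distrib, t1, t2]
  ring
end
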